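/- Consider the deterministic cellular automaton on the triangular lattice T in which each site x has its six T-neighbors grouped into three disjoint adjacent pairs {y₁ˣ,y₂ˣ}, {y₃ˣ,y₄ˣ}, {y₅ˣ,y₆ˣ} (translated consistently over the lattice), and at each time step every spin σ_x is simultaneously flipped to −σ_x iff at least two of its three pairs have both members of the pair equal to −σ_x. Then this dynamics at times m = 1, 2, ... coincides with the zero-temperature Domany dynamics on the hexagonal lattice H' (obtained from T by a star-triangle transformation, adding an A-site at the center of each triangle (x, y_{2i-1}ˣ, y_{2i}ˣ)) restricted to the sublattice B' = T at even times n = 2m, started from the same initial B'-configuration. -/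
import Mathlib


variable {V W : Type*}

/-- The majority value of the spins of the neighbors of `x` (true = +1). -/
def maj (G : SimpleGraph W) [G.LocallyFinite] (σ : W → Bool) (x : W) : Bool :=
  decide (2 ≤ ((G.neighborFinset x).filter (fun y => σ y = true)).card)

open Classical in
/-- The zero-temperature Domany dynamics: sites in `A` are updated (to the majority of
their neighbors) at odd times, sites in `B` at even times. -/
noncomputable def domanyTraj (G : SimpleGraph W) [G.LocallyFinite] (A B : Set W)
    (σ0 : W → Bool) : ℕ → W → Bool
  | 0 => σ0
  | n + 1 => fun x =>
      if x ∈ (if (n + 1) % 2 = 1 then A else B) then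
        maj G (domanyTraj G A B σ0 n) x
      else
        domanyTraj G A B σ0 n x

/-- One step of the deterministic cellular automaton on the triangular lattice: the spin
at `x` is flipped iff at least two of its three pairs of neighbors have both members
carrying the opposite spin `−σ_x`. -/
def triStep (pair : V → Fin 3 → V × V) (σ : V → Bool) : V → Bool := fun x =>
  if 2 ≤ (Finset.univ.filter (fun i : Fin 3 =>
      σ (pair x i).1 = !(σ x) ∧ σ (pair x i).2 = !(σ x))).card
  then !(σ x) else σ x

/-- The trajectory of the triangular-lattice automaton. -/
def triTraj (pair : V → Fin 3 → V × V) (σ0 : V → Bool) : ℕ → V → Bool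
  | 0 => σ0
  | m + 1 => triStep pair (triTraj pair σ0 m)

lemma maj_triple [DecidableEq W] (G : SimpleGraph W) [G.LocallyFinite]
    (σ : W → Bool) (w u v t : W)
    (h : G.neighborFinset w = {u, v, t})
    (huv : u ≠ v) (hut : u ≠ t) (hvt : v ≠ t) :
    maj G σ w = ((σ u && σ v) || (σ u && σ t) || (σ v && σ t)) := by
  unfold maj
  rw [h]
  cases hu : σ u <;> cases hv : σ v <;> cases ht : σ t <;>
    simp [Finset.filter_insert, Finset.filter_singleton, hu, hv, ht,
      Finset.card_insert_of_notMem, huv, hut, hvt]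

lemma tri_key (b c0 d0 c1 d1 c2 d2 : Bool) :
    ((b&&c0||b&&d0||c0&&d0) && (b&&c1||b&&d1||c1&&d1)
      || (b&&c0||b&&d0||c0&&d0) && (b&&c2||b&&d2||c2&&d2)
      || (b&&c1||b&&d1||c1&&d1) && (b&&c2||b&&d2||c2&&d2)) =
    if 2 ≤ ((if (c0 = !b ∧ d0 = !b) then 1 else 0) + (if (c1 = !b ∧ d1 = !b) then 1 else 0)
        + (if (c2 = !b ∧ d2 = !b) then 1 else 0) : ℕ) then !b else b := by
  revert b c0 d0 c1 d1 c2 d2; decide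

/-- the triangular-lattice automaton at times `m = 1, 2, …` coincides with
the zero-temperature Domany dynamics, on the hexagonal lattice obtained from the
triangular lattice by a star-triangle transformation, restricted to the sublattice
`B' = T` at even times `n = 2m`, started from the same initial `B'`-configuration. -/
theorem triangular_automaton_eq_domany
    (T : SimpleGraph V) [T.LocallyFinite]
    (pair : V → Fin 3 → V × V)
    (hpairadj : ∀ x i, T.Adj x (pair x i).1 ∧ T.Adj x (pair x i).2 ∧
      T.Adj (pair x i).1 (pair x i).2)
    (hpairdistinct : ∀ x, Function.Injective
      (fun z : Fin 3 × Bool => if z.2 then (pair x z.1).1 else (pair x z.1).2))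
    (hpairall : ∀ x y, T.Adj x y ↔ ∃ i, y = (pair x i).1 ∨ y = (pair x i).2)
    (G : SimpleGraph W) [G.LocallyFinite] (A' B' : Set W)
    (hdeg : ∀ w, G.degree w = 3)
    (hpart : ∀ w, w ∈ A' ↔ w ∉ B')
    (hbip : ∀ ⦃u v⦄, G.Adj u v → (u ∈ A' ↔ v ∈ B'))
    (ι : V → W) (hι : Function.Injective ι) (hrange : Set.range ι = B')
    (hTadj : ∀ x y, T.Adj x y ↔ x ≠ y ∧ ∃ a ∈ A', G.Adj (ι x) a ∧ G.Adj a (ι y))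
    (hcenter : ∀ x i, ∃ a ∈ A',
      G.neighborSet a = {ι x, ι (pair x i).1, ι (pair x i).2})
    (hcenter' : ∀ a ∈ A', ∃ x i,
      G.neighborSet a = {ι x, ι (pair x i).1, ι (pair x i).2}) :
    ∀ (σ0 : V → Bool) (τ0 : W → Bool), (∀ x, τ0 (ι x) = σ0 x) →
      ∀ m, 1 ≤ m → ∀ x, domanyTraj G A' B' τ0 (2 * m) (ι x) = triTraj pair σ0 m x := by
  classical
  intro σ0 τ0 hτ0
  have unfold1 : ∀ n w, domanyTraj G A' B' τ0 (n+1) w =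
      if w ∈ (if (n+1) % 2 = 1 then A' else B') then
        maj G (domanyTraj G A' B' τ0 n) w
      else domanyTraj G A' B' τ0 n w := fun n w => rfl
  choose a haA haN using hcenter
  suffices h : ∀ m x, domanyTraj G A' B' τ0 (2*m) (ι x) = triTraj pair σ0 m x by
    intro m _ x; exact h m x
  intro m
  induction m with
  | zero => intro x; simpa [domanyTraj, triTraj] using hτ0 x
  | succ m ih =>
    intro x
    set σ : V → Bool := triTraj pair σ0 m with hσ
    -- basic nonequalities
    have hneq : ∀ i : Fin 3, ι x ≠ ι (pair x i).1 ∧ ι x ≠ ι (pair x i).2 ∧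
        ι (pair x i).1 ≠ ι (pair x i).2 := by
      intro i
      obtain ⟨h1, h2, h3⟩ := hpairadj x i
      exact ⟨fun h => h1.ne (hι h), fun h => h2.ne (hι h), fun h => h3.ne (hι h)⟩
    -- neighbor finsets of centers
    have hNfin : ∀ i, G.neighborFinset (a x i) =
        {ι x, ι (pair x i).1, ι (pair x i).2} := by
      intro i
      ext z
      rw [SimpleGraph.mem_neighborFinset, ← SimpleGraph.mem_neighborSet, haN x i]
      simp
    -- centers are adjacent to ι x
    have hadjc : ∀ i, G.Adj (a x i) (ι x) := by
      intro i
      have : ι x ∈ G.neighborSet (a x i) := by rw [haN x i]; simp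
      exact this
    -- centers are pairwise distinct
    have hane : ∀ i j : Fin 3, i ≠ j → a x i ≠ a x j := by
      intro i j hij hEq
      have h1 : ι (pair x i).1 ∈ G.neighborSet (a x j) := by
        rw [← hEq, haN x i]; simp
      rw [haN x j] at h1
      simp only [Set.mem_insert_iff, Set.mem_singleton_iff] at h1
      rcases h1 with h | h | h
      · exact (hpairadj x i).1.ne' (hι h)
      · have h2 : ((i, true) : Fin 3 × Bool) = (j, true) :=
          hpairdistinct x (by simpa using hι h)
        exact hij (congrArg Prod.fst h2)
      · have h2 : ((i, true) : Fin 3 × Bool) = (j, false) :=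
          hpairdistinct x (by simpa using hι h)
        simp at h2
    -- neighbor finset of ι x
    have hNx : G.neighborFinset (ι x) = {a x 0, a x 1, a x 2} := by
      refine (Finset.eq_of_subset_of_card_le ?_ ?_).symm
      · intro z hz
        simp only [Finset.mem_insert, Finset.mem_singleton] at hz
        rcases hz with rfl | rfl | rfl <;>
          exact (SimpleGraph.mem_neighborFinset _ _ _).mpr (hadjc _).symm
      · have hc : ({a x 0, a x 1, a x 2} : Finset W).card = 3 := by
          rw [Finset.card_insert_of_notMem (by
            simp [hane 0 1 (by decide), hane 0 2 (by decide)]),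
            Finset.card_insert_of_notMem (by simp [hane 1 2 (by decide)]),
            Finset.card_singleton]
        rw [SimpleGraph.card_neighborFinset_eq_degree, hdeg, hc]
    have hmemB : ι x ∈ B' := hrange ▸ Set.mem_range_self x
    have e1 : domanyTraj G A' B' τ0 (2*(m+1)) (ι x) =
        maj G (domanyTraj G A' B' τ0 (2*m+1)) (ι x) := by
      rw [show 2*(m+1) = (2*m+1)+1 from by ring, unfold1,
        if_neg (show ¬ ((2*m+1+1) % 2 = 1) from by omega), if_pos hmemB]
    have e2 : ∀ i, domanyTraj G A' B' τ0 (2*m+1) (a x i) =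
        maj G (domanyTraj G A' B' τ0 (2*m)) (a x i) := by
      intro i
      rw [unfold1, if_pos (show (2*m+1) % 2 = 1 from by omega), if_pos (haA x i)]
    have e3 : ∀ i, maj G (domanyTraj G A' B' τ0 (2*m)) (a x i) =
        ((σ x && σ (pair x i).1) || (σ x && σ (pair x i).2)
          || (σ (pair x i).1 && σ (pair x i).2)) := by
      intro i
      obtain ⟨h1, h2, h3⟩ := hneq i
      rw [maj_triple G _ _ _ _ _ (hNfin i) h1 h2 h3, ih x, ih (pair x i).1,
        ih (pair x i).2]
    rw [e1, maj_triple G _ _ _ _ _ hNx (hane 0 1 (by decide)) (hane 0 2 (by decide))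
      (hane 1 2 (by decide)), e2 0, e2 1, e2 2, e3 0, e3 1, e3 2]
    show _ = triStep pair σ x
    simp only [triStep]
    rw [Finset.card_filter, Fin.sum_univ_three]
    exact tri_key (σ x) (σ (pair x 0).1) (σ (pair x 0).2) (σ (pair x 1).1)
      (σ (pair x 1).2) (σ (pair x 2).1) (σ (pair x 2).2)
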